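/- arXiv:1111.5854 — 2 statements merged into one kernel-verified Lean document; each statement's English description precedes it below -/
import Mathlib

section
/- (ℕ̂(p) is forced to be the minimum inductive set) Let (ℙ,≤) be a partial order with the hereditary-subsets topology. For every p ∈ ℙ: ⊩_p ∀S ((∅̂(p) ∈ S ∧ ∀x(x ∈ S → Suc(x) ∈ S)) → ℕ̂(p) ⊆ S), where ℕ̂(p) ⊆ S abbreviates ∀x(x ∈ ℕ̂(p) → x ∈ S). Moreover ℕ̂(p) is itself forced at p to be inductive: ⊩_p (∅̂(p) ∈ ℕ̂(p)) ∧ ∀x(x ∈ ℕ̂(p) → Suc(x) ∈ ℕ̂(p)). -/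
set_option linter.unusedVariables false

noncomputable section

/-- Names for the cumulative hierarchy of variable sets over a partial order `P`:
a name based at `p` assigns to every `q` a family of names (intended to be based at `q`). -/
inductive VName (P : Type) : Type 1
  | mk (base : P) (ι : P → Type) (el : ∀ q : P, ι q → VName P)

namespace VName

variable {P : Type}

/-- The base node of a name. -/
def base : VName P → P
  | mk p _ _ => p

/-- Restriction `f ↾ [r)` of a name to the cone above `r`. -/
def restrictN [Preorder P] : VName P → P → VName P
  | mk _ ι el, r => mk r (fun q => ι q × PLift (r ≤ q)) (fun q x => el q x.1)

/-- Extensional (hereditary) equality of names: this is the equality of the variable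
sets (set valued functions on `[p)`) that the names denote. -/
def Equiv : VName P → VName P → Prop
  | mk p ι el, mk p' ι' el' =>
      p = p' ∧ ∀ q : P, (∀ i : ι q, ∃ j : ι' q, Equiv (el q i) (el' q j)) ∧
        (∀ j : ι' q, ∃ i : ι q, Equiv (el q i) (el' q j))

theorem Equiv.refl : ∀ a : VName P, Equiv a a
  | mk _ ι el => ⟨rfl, fun q => ⟨fun i => ⟨i, Equiv.refl (el q i)⟩,
      fun j => ⟨j, Equiv.refl (el q j)⟩⟩⟩

theorem Equiv.symm : ∀ {a b : VName P}, Equiv a b → Equiv b a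
  | mk _ _ el, mk _ _ el', ⟨hp, h⟩ =>
      ⟨hp.symm, fun q =>
        ⟨fun j => let ⟨i, hi⟩ := (h q).2 j; ⟨i, Equiv.symm hi⟩,
         fun i => let ⟨j, hj⟩ := (h q).1 i; ⟨j, Equiv.symm hj⟩⟩⟩

theorem Equiv.trans : ∀ {a b c : VName P}, Equiv a b → Equiv b c → Equiv a c
  | mk _ _ el, mk _ _ el', mk _ _ el'', ⟨hp, h⟩, ⟨hp', h'⟩ =>
      ⟨hp.trans hp', fun q =>
        ⟨fun i => let ⟨j, hj⟩ := (h q).1 i; let ⟨k, hk⟩ := (h' q).1 j; ⟨k, Equiv.trans hj hk⟩,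
         fun k => let ⟨j, hj⟩ := (h' q).2 k; let ⟨i, hi⟩ := (h q).2 j; ⟨i, Equiv.trans hi hj⟩⟩⟩

instance setoid (P : Type) : Setoid (VName P) :=
  ⟨Equiv, Equiv.refl, Equiv.symm, Equiv.trans⟩

end VName

/-- Variable sets over `P`: names modulo extensional equality. -/
abbrev VSet (P : Type) : Type 1 := Quotient (VName.setoid P)

namespace VSet

variable {P : Type}

/-- The base node. -/
def base : VSet P → P :=
  Quotient.lift VName.base (fun a b h => by cases a; cases b; exact h.1)

/-- The value of a name at a node, as a set of variable sets. -/
def elemsN : VName P → P → Set (VSet P)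
  | .mk _ ι el, q => Set.range fun i : ι q => (⟦el q i⟧ : VSet P)

theorem elemsN_congr : ∀ {a b : VName P}, VName.Equiv a b → elemsN a = elemsN b
  | .mk _ ι el, .mk _ ι' el', ⟨_, h⟩ => by
      funext q
      ext x
      constructor
      · rintro ⟨i, rfl⟩
        obtain ⟨j, hj⟩ := (h q).1 i
        exact ⟨j, (Quotient.sound hj).symm⟩
      · rintro ⟨j, rfl⟩
        obtain ⟨i, hi⟩ := (h q).2 j
        exact ⟨i, Quotient.sound hi⟩

/-- `f.elems q` is the value `f(q)` of the variable set `f` at the node `q`. -/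
def elems : VSet P → P → Set (VSet P) :=
  Quotient.lift elemsN fun _ _ h => elemsN_congr h

theorem restrictN_congr [Preorder P] (r : P) :
    ∀ {a b : VName P}, VName.Equiv a b → VName.Equiv (a.restrictN r) (b.restrictN r)
  | .mk _ _ el, .mk _ _ el', ⟨_, h⟩ =>
      ⟨rfl, fun q =>
        ⟨fun i => let ⟨j, hj⟩ := (h q).1 i.1; ⟨⟨j, i.2⟩, hj⟩,
         fun j => let ⟨i, hi⟩ := (h q).2 j.1; ⟨⟨i, j.2⟩, hi⟩⟩⟩

/-- Restriction `f ↾ [r)`. -/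
def restrict [Preorder P] (f : VSet P) (r : P) : VSet P :=
  Quotient.lift (fun a : VName P => (⟦a.restrictN r⟧ : VSet P))
    (fun _ _ h => Quotient.sound (restrictN_congr r h)) f

end VSet

namespace VName

variable {P : Type}

/-- A name is *good* if it denotes an element of the cumulative hierarchy of variable
sets: its value at each `q` consists of good names based at `q`, it has empty value
outside of the cone of its base, and it is coherent under restrictions
(`g ∈ f(q)` and `q ≤ r` imply `g ↾ [r) ∈ f(r)`). -/
def GoodN [Preorder P] : VName P → Prop
  | .mk p ι el =>
      (∀ q : P, Nonempty (ι q) → p ≤ q) ∧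
      (∀ (q : P) (i : ι q), (el q i).base = q ∧ GoodN (el q i)) ∧
      (∀ (q : P) (i : ι q) (r : P), q ≤ r →
        ∃ j : ι r, VName.Equiv ((el q i).restrictN r) (el r j))

end VName

/-- `Vp p` is the universe `V(p) = ⋃_α V_α(p)` of variable sets at the node `p`. -/
def Vp {P : Type} [Preorder P] (p : P) : Set (VSet P) :=
  {f | ∃ a : VName P, VName.GoodN a ∧ a.base = p ∧ ⟦a⟧ = f}

/-- Membership forced at `p`: `⊩ₚ a ∈ f` iff `a ∈ f(p)`. -/
def memAt {P : Type} [Preorder P] (p : P) (a f : VSet P) : Prop := a ∈ f.elems p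

namespace VSet

variable {P : Type}

/-- Internal unordered pair `{a, b}` based at `q` (name level). -/
def upairN [Preorder P] (q : P) (a b : VName P) : VName P :=
  .mk q (fun r => Bool × PLift (q ≤ r))
    (fun r x => if x.1 then a.restrictN r else b.restrictN r)

/-- Internal (Kuratowski) ordered pair `(a, b)` based at `q` (name level);
its value at `r` is `{{a}↾[r), {a,b}↾[r)}`. -/
def pairN [Preorder P] (q : P) (a b : VName P) : VName P :=
  .mk q (fun r => Bool × PLift (q ≤ r))
    (fun r x => if x.1 then (upairN q a a).restrictN r else (upairN q a b).restrictN r)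

/-- Internal ordered pair `(a, b)` based at `q`. -/
def pairV [Preorder P] (q : P) (a b : VSet P) : VSet P := ⟦pairN q a.out b.out⟧

/-- Internal cartesian product (name level): `(f × g)(r) = {(a,b) : a ∈ f(r), b ∈ g(r)}`. -/
def prodN [Preorder P] (q : P) : VName P → VName P → VName P
  | .mk _ ι el, .mk _ ι' el' =>
      .mk q (fun r => (ι r × ι' r) × PLift (q ≤ r))
        (fun r x => pairN r (el r x.1.1) (el' r x.1.2))

/-- Internal cartesian product `A × B` based at `q`. -/
def prodV [Preorder P] (q : P) (A B : VSet P) : VSet P := ⟦prodN q A.out B.out⟧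

/-- Internal successor (name level): `Suc(f)(q) = {f↾[q)} ∪ f(q)`. -/
def sucN [Preorder P] : VName P → VName P
  | .mk p ι el =>
      .mk p (fun q => ι q ⊕ PLift (p ≤ q))
        (fun q x => Sum.elim (el q) (fun _ => (VName.mk p ι el).restrictN q) x)

/-- Internal successor `Suc(f)`. -/
def sucV [Preorder P] (f : VSet P) : VSet P := ⟦sucN f.out⟧

/-- The name `â(p)` of an external set (given by a `PSet`): `â(p)(q) = {b̂(q) : b ∈ a}`. -/
def hatN [Preorder P] : PSet → P → VName P
  | ⟨_, A⟩, p => .mk p (fun q => _ × PLift (p ≤ q)) (fun q x => hatN (A x.1) q)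

/-- The variable set `â(p)` associated to an external set `a`. -/
def hatV [Preorder P] (a : ZFSet) (p : P) : VSet P := ⟦hatN a.out p⟧

end VSet

/-- The von Neumann natural `n` as a `ZFSet`. -/
def natToZF : ℕ → ZFSet
  | 0 => ∅
  | n + 1 => insert (natToZF n) (natToZF n)


/-- First-order formulas of set theory (with de Bruijn variables `Fin n`), together
with an ordered-pair atom `isPair i j k` ("xᵢ = (xⱼ, xₖ)") and a pair-membership atom
`pairMem i j k` ("(xᵢ, xⱼ) ∈ xₖ"). -/
inductive SetFml : ℕ → Type
  | mem {n} (i j : Fin n) : SetFml n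
  | eq {n} (i j : Fin n) : SetFml n
  | isPair {n} (i j k : Fin n) : SetFml n
  | pairMem {n} (i j k : Fin n) : SetFml n
  | and {n} (f g : SetFml n) : SetFml n
  | or {n} (f g : SetFml n) : SetFml n
  | imp {n} (f g : SetFml n) : SetFml n
  | not {n} (f : SetFml n) : SetFml n
  | ex {n} (f : SetFml (n + 1)) : SetFml n
  | all {n} (f : SetFml (n + 1)) : SetFml n

namespace SetFml

/-- Biconditional. -/
def iff {n} (f g : SetFml n) : SetFml n := .and (.imp f g) (.imp g f)

/-- Relabelling of free variables (weakening/substitution of variables). -/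
def relabel : ∀ {n m : ℕ}, (Fin n → Fin m) → SetFml n → SetFml m
  | _, _, g, .mem i j => .mem (g i) (g j)
  | _, _, g, .eq i j => .eq (g i) (g j)
  | _, _, g, .isPair i j k => .isPair (g i) (g j) (g k)
  | _, _, g, .pairMem i j k => .pairMem (g i) (g j) (g k)
  | _, _, g, .and f₁ f₂ => .and (relabel g f₁) (relabel g f₂)
  | _, _, g, .or f₁ f₂ => .or (relabel g f₁) (relabel g f₂)
  | _, _, g, .imp f₁ f₂ => .imp (relabel g f₁) (relabel g f₂)
  | _, _, g, .not f => .not (relabel g f)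
  | _, _, g, .ex f => .ex (relabel (Fin.cases 0 fun i => (g i).succ) f)
  | _, _, g, .all f => .all (relabel (Fin.cases 0 fun i => (g i).succ) f)

/-- Universal closure of a formula. -/
def closeAll : ∀ {n : ℕ}, SetFml n → SetFml 0
  | 0, f => f
  | _ + 1, f => closeAll (.all f)

/-- Classical realization of a set-theoretic formula in a structure `(M, E)`. -/
def RealizeIn {M : Type*} (E : M → M → Prop) : ∀ {n}, SetFml n → (Fin n → M) → Prop
  | _, .mem i j, v => E (v i) (v j)
  | _, .eq i j, v => v i = v j
  | _, .isPair i j k, v =>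
      ∀ u, E u (v i) ↔ ((∀ t, E t u ↔ t = v j) ∨ (∀ t, E t u ↔ (t = v j ∨ t = v k)))
  | _, .pairMem i j k, v =>
      ∃ w, E w (v k) ∧
        ∀ u, E u w ↔ ((∀ t, E t u ↔ t = v i) ∨ (∀ t, E t u ↔ (t = v i ∨ t = v j)))
  | _, .and f g, v => RealizeIn E f v ∧ RealizeIn E g v
  | _, .or f g, v => RealizeIn E f v ∨ RealizeIn E g v
  | _, .imp f g, v => RealizeIn E f v → RealizeIn E g v
  | _, .not f, v => ¬ RealizeIn E f v
  | _, .ex f, v => ∃ a, RealizeIn E f (Fin.cons a v)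
  | _, .all f, v => ∀ a, RealizeIn E f (Fin.cons a v)

end SetFml

/-- The sheaf forcing relation `⊩ₚ φ[σ₁,…,σₙ]` over the topology of hereditary
(upward closed) subsets of `P`: since `[p)` is the least open neighbourhood of `p`,
`¬`, `→`, `∀` are evaluated over all `q ≥ p`, and `∃` is witnessed in `V(p)`. -/
def Forces {P : Type} [Preorder P] : ∀ {n : ℕ}, P → SetFml n → (Fin n → VSet P) → Prop
  | _, p, .mem i j, s => s i ∈ (s j).elems p
  | _, p, .eq i j, s => s i = s j
  | _, p, .isPair i j k, s => s i = VSet.pairV p (s j) (s k)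
  | _, p, .pairMem i j k, s => VSet.pairV p (s i) (s j) ∈ (s k).elems p
  | _, p, .and f g, s => Forces p f s ∧ Forces p g s
  | _, p, .or f g, s => Forces p f s ∨ Forces p g s
  | _, p, .imp f g, s => ∀ q : P, p ≤ q →
      Forces q f (fun i => (s i).restrict q) → Forces q g (fun i => (s i).restrict q)
  | _, p, .not f, s => ∀ q : P, p ≤ q → ¬ Forces q f (fun i => (s i).restrict q)
  | _, p, .ex f, s => ∃ σ ∈ Vp p, Forces p f (Fin.cons σ s)
  | _, p, .all f, s => ∀ q : P, p ≤ q → ∀ σ ∈ Vp q,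
      Forces q f (Fin.cons σ fun i => (s i).restrict q)


namespace SetFml

/-- `xᵢ ⊆ xⱼ`. -/
def fSub {n} (i j : Fin n) : SetFml n := .all (.imp (.mem 0 i.succ) (.mem 0 j.succ))

/-- "`x_f` is a set of ordered pairs and is single valued" (`f` is a function). -/
def fIsFunction {n} (f : Fin n) : SetFml n :=
  .and (.all (.imp (.mem 0 f.succ) (.ex (.ex (.isPair 2 1 0)))))
    (.all (.all (.all (.imp
      (.and (.pairMem 2 1 f.succ.succ.succ) (.pairMem 2 0 f.succ.succ.succ)) (.eq 1 0)))))

/-- "`x_f` is defined on every element of `x_a`". -/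
def fTotal {n} (f a : Fin n) : SetFml n :=
  .all (.imp (.mem 0 a.succ) (.ex (.pairMem 1 0 f.succ.succ)))

/-- "`x_f` is onto `x_b`". -/
def fOnto {n} (f b : Fin n) : SetFml n :=
  .all (.imp (.mem 0 b.succ) (.ex (.pairMem 0 1 f.succ.succ)))

/-- "`x_f` is injective". -/
def fInjective {n} (f : Fin n) : SetFml n :=
  .all (.all (.all (.imp
    (.and (.pairMem 2 0 f.succ.succ.succ) (.pairMem 1 0 f.succ.succ.succ)) (.eq 2 1))))

/-- "`x_f` is a function from `x_a` to `x_b`". -/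
def fFuncFromTo {n} (f a b : Fin n) : SetFml n :=
  .and (.all (.imp (.mem 0 f.succ) (.ex (.ex (.and (.mem 1 a.succ.succ.succ)
      (.and (.mem 0 b.succ.succ.succ) (.isPair 2 1 0)))))))
    (.and (.all (.all (.all (.imp
        (.and (.pairMem 2 1 f.succ.succ.succ) (.pairMem 2 0 f.succ.succ.succ)) (.eq 1 0)))))
      (fTotal f a))

/-- "`x_f` is an injective function from `x_a` to `x_b`". -/
def fInjFromTo {n} (f a b : Fin n) : SetFml n := .and (fFuncFromTo f a b) (fInjective f)

/-- "`x_f` is a surjective function from `x_a` onto `x_b`". -/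
def fSurjFromTo {n} (f a b : Fin n) : SetFml n := .and (fFuncFromTo f a b) (fOnto f b)

/-- `|x_a| < |x_b|`: there is an injective function from `x_a` to `x_b` and
no surjective function from `x_a` onto `x_b`. -/
def fCardLt {n} (a b : Fin n) : SetFml n :=
  .and (.ex (fInjFromTo 0 a.succ b.succ)) (.not (.ex (fSurjFromTo 0 a.succ b.succ)))

/-- "`x_S` is an inductive set" (contains the empty set, closed under successor). -/
def fInductive {n} (S : Fin n) : SetFml n :=
  .and (.ex (.and (.mem 0 S.succ) (.all (.not (.mem 0 1)))))
    (.all (.imp (.mem 0 S.succ) (.ex (.and (.mem 0 S.succ.succ)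
      (.all (.iff (.mem 0 1) (.or (.mem 0 2) (.eq 0 2))))))))

/-- "`x_N` is the set of natural numbers" (the least inductive set). -/
def fIsNat {n} (N : Fin n) : SetFml n :=
  .and (fInductive N) (.all (.imp (fInductive 0) (fSub N.succ 0)))

/-- "`x_pw` is the power set of `x_x`". -/
def fIsPow {n} (pw x : Fin n) : SetFml n := .all (.iff (.mem 0 pw.succ) (fSub 0 x.succ))

/-- `¬CH`: there is a set `B` with `|ℕ| < |B| < |P(ℕ)|`. -/
def negCHFml : SetFml 0 :=
  .ex (.ex (.ex (.and (fIsNat 2)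
    (.and (fIsPow 1 2) (.and (fCardLt 2 0) (fCardLt 0 1))))))

/-! The axioms of `ZFC` as sentences (the axiom of foundation in its `¬¬` form and
the axiom of choice in the form `∀𝓕(∀x∀y φ → ¬¬ψ*)`). -/

/-- Axiom of existence of the empty set: `∃x∀y ¬(y ∈ x)`. -/
def existsEmptyAx : SetFml 0 := .ex (.all (.not (.mem 0 1)))

/-- Axiom of extensionality: `∀x∀y(∀z(z ∈ x ↔ z ∈ y) → x = y)`. -/
def extAx : SetFml 0 :=
  .all (.all (.imp (.all (.iff (.mem 0 2) (.mem 0 1))) (.eq 1 0)))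

/-- Axiom of pairing: `∀x∀y∃z∀w(w ∈ z ↔ (w = x ∨ w = y))`. -/
def pairAx : SetFml 0 :=
  .all (.all (.ex (.all (.iff (.mem 0 1) (.or (.eq 0 3) (.eq 0 2))))))

/-- Axiom of union: `∀𝓕∃A∀x(x ∈ A ↔ ∃Y(Y ∈ 𝓕 ∧ x ∈ Y))`. -/
def unionAx : SetFml 0 :=
  .all (.ex (.all (.iff (.mem 0 1) (.ex (.and (.mem 0 3) (.mem 1 0))))))

/-- Axiom of power set: `∀x∃y∀z(z ∈ y ↔ ∀w(w ∈ z → w ∈ x))`. -/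
def powAx : SetFml 0 :=
  .all (.ex (.all (.iff (.mem 0 1) (.all (.imp (.mem 0 1) (.mem 0 3))))))

/-- Axiom of infinity: there exists an inductive set. -/
def infAx : SetFml 0 :=
  .ex (.and (.ex (.and (.mem 0 1) (.all (.not (.mem 0 1)))))
    (.all (.imp (.mem 0 1) (.ex (.and (.mem 0 2)
      (.all (.iff (.mem 0 1) (.or (.mem 0 2) (.eq 0 2)))))))))

/-- The matrix `x ∈ y ↔ (x ∈ z ∧ φ(x,z,w₁,…,wₙ))` of the comprehension axiom, in the
context `0 = x, 1 = y, 2 = z, 3+i = wᵢ`. -/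
def compInner {n} (φ : SetFml (n + 2)) : SetFml (n + 3) :=
  .iff (.mem 0 1) (.and (.mem 0 2)
    (φ.relabel (Fin.cases 0 (Fin.cases 2 fun j => j.succ.succ.succ))))

/-- The comprehension axiom for `φ(x,z,w₁,…,wₙ)` (free variables `0 = x, 1 = z,
2+i = wᵢ`): `∀z∀w₁…∀wₙ∃y∀x(x ∈ y ↔ (x ∈ z ∧ φ))`. -/
def compAx {n} (φ : SetFml (n + 2)) : SetFml 0 :=
  closeAll (.ex (.all (compInner φ)))

/-- `∀x(x ∈ A → ∃!y φ(x,y,A,w₁,…,wₙ))`, in the context `0 = A, 1+i = wᵢ`;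
`φ` has free variables `0 = x, 1 = y, 2 = A, 3+i = wᵢ`. -/
def replHyp {n} (φ : SetFml (n + 3)) : SetFml (n + 1) :=
  .all (.imp (.mem 0 1) (.ex (.and
    (φ.relabel (Fin.cases 1 (Fin.cases 0 (Fin.cases 2 fun j => j.succ.succ.succ))))
    (.all (.imp
      (φ.relabel (Fin.cases 2 (Fin.cases 0 (Fin.cases 3 fun j => j.succ.succ.succ.succ))))
      (.eq 0 1))))))

/-- `∃Y∀x(x ∈ A → ∃y(y ∈ Y ∧ φ(x,y,A,w⃗)))`, in the context `0 = A, 1+i = wᵢ`. -/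
def replConcl {n} (φ : SetFml (n + 3)) : SetFml (n + 1) :=
  .ex (.all (.imp (.mem 0 2) (.ex (.and (.mem 0 2)
    (φ.relabel (Fin.cases 1 (Fin.cases 0 (Fin.cases 3 fun j => j.succ.succ.succ.succ))))))))

/-- The replacement axiom for `φ(x,y,A,w₁,…,wₙ)`. -/
def replAx {n} (φ : SetFml (n + 3)) : SetFml 0 :=
  closeAll (.imp (replHyp φ) (replConcl φ))

/-- The axiom of foundation, in the (classically equivalent) `¬¬` form:
`¬∃x ¬(∃y(y ∈ x) → ∃y(y ∈ x ∧ ¬∃z(z ∈ x ∧ z ∈ y)))`. -/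
def foundAx : SetFml 0 :=
  .not (.ex (.not (.imp (.ex (.mem 0 1))
    (.ex (.and (.mem 0 1) (.not (.ex (.and (.mem 0 2) (.mem 0 1)))))))))

/-- `φ := (x ∈ 𝓕 ∧ y ∈ 𝓕 → ((∃z(z ∈ x ∧ z ∈ y) → x = y) ∧ ∃z(z ∈ x)))`,
in the context `0 = y, 1 = x, 2 = 𝓕`. -/
def acPhi : SetFml 3 :=
  .imp (.and (.mem 1 2) (.mem 0 2))
    (.and (.imp (.ex (.and (.mem 0 2) (.mem 0 1))) (.eq 1 0)) (.ex (.mem 0 2)))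

/-- `ψ* := ∃E(x ∈ 𝓕 → ∃a(a ∈ E ∧ a ∈ x ∧ ∀b(b ∈ E ∧ b ∈ x → ¬¬(b = a))))`,
in the context `0 = y, 1 = x, 2 = 𝓕`. -/
def acPsiStar : SetFml 3 :=
  .ex (.imp (.mem 2 3) (.ex (.and (.mem 0 1) (.and (.mem 0 3)
    (.all (.imp (.and (.mem 0 2) (.mem 0 4)) (.not (.not (.eq 0 1)))))))))

/-- The axiom of choice in the form `∀𝓕∀x∀y(φ → ¬¬ψ*)`. -/
def acAx : SetFml 0 := .all (.all (.all (.imp acPhi (.not (.not acPsiStar)))))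

end SetFml


/-! Every member of `ℕ̂(p)` at a stage `u` is the hat `n̂(u)` of a von Neumann numeral, and
`Suc(n̂(u)) = (n+1)^(u)` because the new element `n̂(u)↾[q)` of the successor is `n̂(q)`.
Hence `ℕ̂(p)` is closed under `Suc`, and an `S` forced to contain `∅̂` and to be closed under
`Suc` from stage `r` on contains every `n̂(u)`, `u ≥ r`, by induction on `n`; for `n = 0` the
coherence of `S` under restriction carries `∅̂(r)` up to `∅̂(u)`. -/

theorem ZFSet.mk_ofNat (n : ℕ) : ZFSet.mk (PSet.ofNat n) = natToZF n := by
  induction n with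
  | zero => rfl
  | succ n ih => rw [natToZF, ← ih]; rfl

theorem ZFSet.mem_omega_iff {b : ZFSet} : b ∈ ZFSet.omega ↔ ∃ n, b = natToZF n := by
  induction b using Quotient.inductionOn with
  | h x =>
    simp only [ZFSet.omega, ZFSet.mk_eq, ZFSet.mk_mem_iff, PSet.mem_def, ← ZFSet.mk_ofNat,
      ZFSet.eq]
    exact ⟨fun ⟨⟨n⟩, h⟩ => ⟨n, h⟩, fun ⟨n, h⟩ => ⟨⟨n⟩, h⟩⟩

namespace VSet

variable {P : Type}

theorem elems_mk (a : VName P) : elems ⟦a⟧ = elemsN a := rfl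

variable [Preorder P]

theorem sucN_congr : ∀ {a b : VName P}, VName.Equiv a b → VName.Equiv (sucN a) (sucN b)
  | .mk _ _ el, .mk _ _ el', hab@⟨rfl, h⟩ =>
      ⟨rfl, fun q =>
        ⟨fun | .inl i => let ⟨j, hj⟩ := (h q).1 i; ⟨.inl j, hj⟩
             | .inr hq => ⟨.inr hq, restrictN_congr q hab⟩,
         fun | .inl j => let ⟨i, hi⟩ := (h q).2 j; ⟨.inl i, hi⟩
             | .inr hq => ⟨.inr hq, restrictN_congr q hab⟩⟩⟩

theorem sucV_mk (a : VName P) : sucV ⟦a⟧ = ⟦sucN a⟧ :=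
  Quotient.sound (sucN_congr (Quotient.mk_out a))

theorem hatN_base : ∀ (a : PSet) (q : P), (hatN a q).base = q
  | ⟨_, _⟩, _ => rfl

theorem hatN_congr : ∀ {a b : PSet}, PSet.Equiv a b → ∀ q : P,
    VName.Equiv (hatN a q) (hatN b q)
  | ⟨_, _⟩, ⟨_, _⟩, ⟨h₁, h₂⟩, _ =>
      ⟨rfl, fun _ =>
        ⟨fun i => let ⟨j, hj⟩ := h₁ i.1; ⟨⟨j, i.2⟩, hatN_congr hj _⟩,
         fun j => let ⟨i, hi⟩ := h₂ j.1; ⟨⟨i, j.2⟩, hatN_congr hi _⟩⟩⟩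

theorem restrictN_hatN : ∀ (a : PSet) {q r : P}, q ≤ r →
    VName.Equiv ((hatN a q).restrictN r) (hatN a r)
  | ⟨_, _⟩, _, _, hqr =>
      ⟨rfl, fun _ =>
        ⟨fun i => ⟨⟨i.1.1, i.2⟩, .refl _⟩,
         fun j => ⟨⟨⟨j.1, ⟨hqr.trans j.2.down⟩⟩, j.2⟩, .refl _⟩⟩⟩

theorem goodN_hatN : ∀ (a : PSet) (q : P), (hatN a q).GoodN
  | ⟨_, A⟩, _ =>
      ⟨fun _ ⟨i⟩ => i.2.down,
       fun s i => ⟨hatN_base (A i.1) s, goodN_hatN (A i.1) s⟩,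
       fun _ i _ hsr => ⟨⟨i.1, ⟨i.2.down.trans hsr⟩⟩, restrictN_hatN (A i.1) hsr⟩⟩

theorem sucN_hatN : ∀ (a : PSet) (q : P),
    VName.Equiv (sucN (hatN a q)) (hatN (insert a a) q)
  | ⟨α, A⟩, _ =>
      ⟨rfl, fun _ =>
        ⟨fun | .inl i => ⟨⟨some i.1, i.2⟩, .refl _⟩
             | .inr h => ⟨⟨none, h⟩, restrictN_hatN ⟨α, A⟩ h.down⟩,
         fun | ⟨some i, h⟩ => ⟨.inl ⟨i, h⟩, .refl _⟩
             | ⟨none, h⟩ => ⟨.inr h, restrictN_hatN ⟨α, A⟩ h.down⟩⟩⟩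

theorem hatV_mk (x : PSet) (p : P) : hatV (ZFSet.mk x) p = ⟦hatN x p⟧ :=
  Quotient.sound (hatN_congr (ZFSet.exact (ZFSet.mk_out (ZFSet.mk x))) p)

theorem hatV_mem_Vp (a : ZFSet) (p : P) : hatV a p ∈ Vp p :=
  ⟨_, goodN_hatN _ _, hatN_base _ _, rfl⟩

theorem restrict_hatV (a : ZFSet) {q r : P} (hqr : q ≤ r) :
    (hatV a q).restrict r = hatV a r :=
  Quotient.sound (restrictN_hatN _ hqr)

theorem sucV_hatV (a : ZFSet) (p : P) : sucV (hatV a p) = hatV (insert a a) p := by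
  induction a using Quotient.inductionOn with
  | h x =>
    rw [ZFSet.mk_eq, hatV_mk, sucV_mk, show insert (ZFSet.mk x) (ZFSet.mk x) =
      ZFSet.mk (insert x x) from rfl, hatV_mk]
    exact Quotient.sound (sucN_hatN x p)

theorem mem_elems_hatV {a : ZFSet} {p u : P} {y : VSet P} :
    y ∈ (hatV a p).elems u ↔ p ≤ u ∧ ∃ b ∈ a, y = hatV b u := by
  induction a using Quotient.inductionOn with
  | h x =>
    obtain ⟨α, A⟩ := x
    rw [ZFSet.mk_eq, hatV_mk, elems_mk]
    constructor
    · rintro ⟨⟨i, hpu⟩, rfl⟩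
      exact ⟨hpu.down, ZFSet.mk (A i), ZFSet.mk_mem_iff.2 (PSet.Mem.mk A i), (hatV_mk _ _).symm⟩
    · rintro ⟨hpu, b, hb, rfl⟩
      induction b using Quotient.inductionOn with
      | h z =>
        rw [ZFSet.mk_eq, ZFSet.mk_mem_iff] at hb
        obtain ⟨i, hi⟩ := hb
        rw [ZFSet.mk_eq, hatV_mk]
        exact ⟨⟨i, ⟨hpu⟩⟩, Quotient.sound (hatN_congr hi.symm u)⟩

theorem restrict_mem_elems_of_mem_Vp {q : P} {S : VSet P} (hS : S ∈ Vp q) {u w : P}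
    (huw : u ≤ w) {y : VSet P} (hy : y ∈ S.elems u) : y.restrict w ∈ S.elems w := by
  obtain ⟨⟨_, ι, el⟩, ⟨-, -, hcoh⟩, -, rfl⟩ := hS
  induction y using Quotient.inductionOn with
  | h c =>
    obtain ⟨i, hi⟩ := hy
    obtain ⟨j, hj⟩ := hcoh u i w huw
    exact ⟨j, (Quotient.sound ((restrictN_congr w (Quotient.exact hi).symm).trans hj)).symm⟩

theorem hatV_natToZF_mem_of_inductive {q r : P} {S : VSet P} (hS : S ∈ Vp q)
    (h₀ : hatV ∅ r ∈ S.elems r)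
    (hsuc : ∀ u, r ≤ u → ∀ x ∈ Vp u,
      x.restrict u ∈ S.elems u → sucV (x.restrict u) ∈ S.elems u)
    (n : ℕ) {u : P} (hru : r ≤ u) : hatV (natToZF n) u ∈ S.elems u := by
  induction n generalizing u with
  | zero =>
    simpa only [natToZF, restrict_hatV _ hru] using restrict_mem_elems_of_mem_Vp hS hru h₀
  | succ n ih =>
    simpa only [natToZF, restrict_hatV _ le_rfl, sucV_hatV] using
      hsuc u hru _ (hatV_mem_Vp _ u) (by simpa only [restrict_hatV _ le_rfl] using ih hru)

end VSet

/-- **`ℕ̂(p)` is forced to be the minimum inductive set.**  First part: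
`⊩ₚ ∀S((∅̂ ∈ S ∧ ∀x(x ∈ S → Suc(x) ∈ S)) → ℕ̂ ⊆ S)`, with the forcing clauses for
`∀`, `→` unfolded over the topology of hereditary subsets.  Second part: `ℕ̂(p)` is
itself forced at `p` to be inductive. -/
theorem nat_hat_minimum_inductive {P : Type} [PartialOrder P] (p : P) :
    (∀ q : P, p ≤ q → ∀ S ∈ Vp q, ∀ r : P, q ≤ r →
      ((VSet.hatV (∅ : ZFSet) r ∈ VSet.elems S r ∧
          ∀ t : P, r ≤ t → ∀ x ∈ Vp t, ∀ u : P, t ≤ u →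
            (x.restrict u ∈ VSet.elems S u →
              VSet.sucV (x.restrict u) ∈ VSet.elems S u)) →
        ∀ t : P, r ≤ t → ∀ x ∈ Vp t, ∀ u : P, t ≤ u →
          (x.restrict u ∈ VSet.elems (VSet.hatV ZFSet.omega p) u →
            x.restrict u ∈ VSet.elems S u))) ∧
    (VSet.hatV (∅ : ZFSet) p ∈ VSet.elems (VSet.hatV ZFSet.omega p) p ∧
      ∀ t : P, p ≤ t → ∀ x ∈ Vp t, ∀ u : P, t ≤ u →
        (x.restrict u ∈ VSet.elems (VSet.hatV ZFSet.omega p) u →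
          VSet.sucV (x.restrict u) ∈ VSet.elems (VSet.hatV ZFSet.omega p) u)) := by
  refine ⟨?minimal, ?zero_mem, ?succ_mem⟩
  case minimal =>
    rintro q - S hS r - ⟨h₀, hsuc⟩ t hrt x - u htu hx
    obtain ⟨-, b, hb, hxb⟩ := VSet.mem_elems_hatV.1 hx
    obtain ⟨n, rfl⟩ := ZFSet.mem_omega_iff.1 hb
    rw [hxb]
    exact VSet.hatV_natToZF_mem_of_inductive hS h₀ (fun u hu x hx => hsuc u hu x hx u le_rfl) n
      (hrt.trans htu)
  case zero_mem =>
    exact VSet.mem_elems_hatV.2 ⟨le_rfl, ∅, ZFSet.mem_omega_iff.2 ⟨0, rfl⟩, rfl⟩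
  case succ_mem =>
    rintro t - x - u - hx
    obtain ⟨hpu, b, hb, hxb⟩ := VSet.mem_elems_hatV.1 hx
    obtain ⟨n, rfl⟩ := ZFSet.mem_omega_iff.1 hb
    rw [hxb, VSet.sucV_hatV]
    exact VSet.mem_elems_hatV.2 ⟨hpu, _, ZFSet.mem_omega_iff.2 ⟨n + 1, rfl⟩, rfl⟩

end
end

section
/- (Axiom of Foundation, ¬¬ form, is forced) Let (ℙ,≤) be a partial order with the hereditary-subsets topology. For every p ∈ ℙ: ⊩_p ¬∃x ¬(∃y(y ∈ x) → ∃y(y ∈ x ∧ ¬∃z(z ∈ x ∧ z ∈ y))). -/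
set_option linter.unusedVariables false

noncomputable section

/-! Membership of variable sets is well founded. If some `σ ∈ V(q)` witnessed the failure of
foundation above `q`, then starting from an element of `σ` one could keep descending along `∈`,
each time passing to a later node where the current element of `σ` meets `σ`. Since the descent
must stop, there is a node `r ≥ q` from which on every nonempty `σ(t)` has an element `y₀` with
`y₀(u) ∩ σ(u) = ∅` for all `u ≥ t`, and then `r` forces the instance of foundation for `σ`. -/

namespace VSet

variable {P : Type}

theorem wellFounded_mem_elems : WellFounded fun z y : VSet P => ∃ u, z ∈ y.elems u := by
  refine ⟨Quotient.ind fun a => ?_⟩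
  induction a with
  | mk p ι el ih =>
    refine ⟨_, fun z ⟨u, hz⟩ => ?_⟩
    obtain ⟨i, rfl⟩ := hz
    exact ih u i

theorem elems_restrict [Preorder P] (w : VSet P) {r u : P} (h : r ≤ u) :
    (w.restrict r).elems u = w.elems u := by
  induction w using Quotient.inductionOn with
  | h a =>
    cases a with
    | mk p ι el =>
      ext x
      constructor
      · rintro ⟨i, rfl⟩
        exact ⟨i.1, rfl⟩
      · rintro ⟨i, rfl⟩
        exact ⟨⟨i, ⟨h⟩⟩, rfl⟩

theorem elems_restrict_restrict [Preorder P] (w : VSet P) {r t u : P} (hrt : r ≤ t)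
    (htu : t ≤ u) : ((w.restrict r).restrict t).elems u = w.elems u := by
  rw [elems_restrict _ htu, elems_restrict _ (hrt.trans htu)]

end VSet

section Vp

variable {P : Type} [Preorder P] {p t : P} {f y : VSet P}

theorem mem_Vp_of_mem_elems (hf : f ∈ Vp p) (hy : y ∈ f.elems t) : y ∈ Vp t := by
  obtain ⟨⟨_, ι, el⟩, ⟨-, hgood, -⟩, -, rfl⟩ := hf
  obtain ⟨i, rfl⟩ := hy
  exact ⟨el t i, (hgood t i).2, (hgood t i).1, rfl⟩

theorem restrict_mem_elems_of_mem_Vp (hf : f ∈ Vp p) (hy : y ∈ f.elems t) {u : P}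
    (htu : t ≤ u) : y.restrict u ∈ f.elems u := by
  obtain ⟨⟨_, ι, el⟩, ⟨-, -, hcoh⟩, -, rfl⟩ := hf
  obtain ⟨i, rfl⟩ := hy
  obtain ⟨j, hj⟩ := hcoh t i u htu
  exact ⟨j, (Quotient.sound hj).symm⟩

end Vp

section Minimal

variable {P : Type} [Preorder P]

def HasMinimalElemsFrom (f : VSet P) (r : P) : Prop :=
  ∀ t, r ≤ t → ∀ y ∈ f.elems t, ∃ y₀ ∈ f.elems t, ∀ u, t ≤ u → ∀ z ∈ f.elems u, z ∉ y₀.elems u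

theorem exists_hasMinimalElemsFrom_of_mem {p : P} {f : VSet P} (hf : f ∈ Vp p) {t : P}
    {y : VSet P} (hy : y ∈ f.elems t) : ∃ r, t ≤ r ∧ HasMinimalElemsFrom f r := by
  induction y using VSet.wellFounded_mem_elems.induction generalizing t with
  | _ y ih =>
  by_cases hmin : HasMinimalElemsFrom f t
  · exact ⟨t, le_rfl, hmin⟩
  unfold HasMinimalElemsFrom at hmin
  push Not at hmin
  obtain ⟨t', htt', -, -, hfail⟩ := hmin
  obtain ⟨u, ht'u, z, hz, hzy⟩ := hfail _ (restrict_mem_elems_of_mem_Vp hf hy htt')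
  rw [VSet.elems_restrict _ ht'u] at hzy
  obtain ⟨r, hur, hr⟩ := ih z ⟨u, hzy⟩ hz
  exact ⟨r, htt'.trans (ht'u.trans hur), hr⟩

theorem exists_hasMinimalElemsFrom {p : P} {f : VSet P} (hf : f ∈ Vp p) :
    ∃ r, p ≤ r ∧ HasMinimalElemsFrom f r := by
  by_cases hne : ∃ t, p ≤ t ∧ ∃ y, y ∈ f.elems t
  · obtain ⟨t, hpt, y, hy⟩ := hne
    obtain ⟨r, htr, hr⟩ := exists_hasMinimalElemsFrom_of_mem hf hy
    exact ⟨r, hpt.trans htr, hr⟩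
  · push Not at hne
    exact ⟨p, le_rfl, fun t hpt y hy => absurd hy (hne t hpt y)⟩

end Minimal

/-- **The axiom of foundation (in its `¬¬` form) is forced:**
`⊩ₚ ¬∃x¬(∃y(y ∈ x) → ∃y(y ∈ x ∧ ¬∃z(z ∈ x ∧ z ∈ y)))` for every `p`. -/
theorem foundation_forced {P : Type} [PartialOrder P] (p : P) :
    Forces p SetFml.foundAx ![] := by
  rintro q - ⟨σ, hσ, hnot⟩
  obtain ⟨r, hqr, hmin⟩ := exists_hasMinimalElemsFrom hσ
  refine hnot r hqr fun t hrt ⟨y, _, hy⟩ => ?_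
  change y ∈ ((σ.restrict r).restrict t).elems t at hy
  rw [VSet.elems_restrict_restrict _ hrt le_rfl] at hy
  obtain ⟨y₀, hy₀, hy₀_min⟩ := hmin t hrt y hy
  simp only [Forces, Fin.cons_one]
  refine ⟨y₀, mem_Vp_of_mem_elems hσ hy₀, ?_, fun u htu ⟨z, _, hz, hzy₀⟩ => ?_⟩
  · rwa [VSet.elems_restrict_restrict _ hrt le_rfl]
  change z ∈ (((σ.restrict r).restrict t).restrict u).elems u at hz
  rw [VSet.elems_restrict _ le_rfl, VSet.elems_restrict_restrict _ hrt htu] at hz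
  rw [VSet.elems_restrict _ le_rfl] at hzy₀
  exact hy₀_min u htu z hz hzy₀
end
end
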